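/- Let p : ℝ^d → (0,∞), h : ℝ^d → ℝ and φ : ℝ^d → ℝ be infinitely differentiable, and let ĥ ∈ ℝ. Suppose −∑_{i=1}^d ∂/∂x_i ( p · ∂φ/∂x_i ) = (h − ĥ) p everywhere on ℝ^d. For a finite sequence σ = (σ(1),…,σ(l)) ∈ {1,…,d}^l write ∇^l_σ φ = ∂^l φ / ∂x_{σ(1)}⋯∂x_{σ(l)}. Define functions G^l_σ recursively by G¹_{(σ(1))} = ∑_{i=1}^d (∂²(log p)/∂x_i∂x_{σ(1)}) (∂φ/∂x_i) + ∂h/∂x_{σ(1)}, and for l ≥ 2, G^l_σ = ∑_{i=1}^d (∂²(log p)/∂x_i∂x_{σ(l)}) · ∂/∂x_i( ∇^{l−1}_{σ|_{1:l−1}} φ ) + ∂ G^{l−1}_{σ|_{1:l−1}} / ∂x_{σ(l)}, where σ|_{1:l−1} = (σ(1),…,σ(l−1)). Then for every l ≥ 1 and every σ ∈ {1,…,d}^l, −∑_{i=1}^d ∂/∂x_i ( p · ∂(∇^l_σ φ)/∂x_i ) = G^l_σ · p everywhere on ℝ^d. -/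

import Mathlib

/-!
Dividing by `p`, the equation `-∑ᵢ ∂ᵢ(p ∂ᵢψ) = g p` says `Δψ + ∇(log p) · ∇ψ = -g`.
Differentiating in `x_j` and commuting partial derivatives shows that `∂ⱼψ` solves the same
equation with `g` replaced by `∑ᵢ ∂ᵢ∂ⱼ(log p) ∂ᵢψ + ∂ⱼg`; this is exactly the recursion defining
`G`, so the theorem follows by induction on `l`.
-/

open scoped ContDiff

/-- Partial derivative `∂f/∂x_i` of a scalar function on `ℝ^d`. -/
noncomputable def pd {d : ℕ} (i : Fin d) (f : (Fin d → ℝ) → ℝ) (x : Fin d → ℝ) : ℝ :=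
  fderiv ℝ f x (Pi.single i 1)

/-- Iterated partial derivative `∇^l_σ f = ∂^l f/∂x_{σ(1)}⋯∂x_{σ(l)}`. -/
noncomputable def iterD {d : ℕ} :
    (l : ℕ) → (Fin l → Fin d) → ((Fin d → ℝ) → ℝ) → ((Fin d → ℝ) → ℝ)
  | 0, _, f => f
  | l + 1, σ, f => pd (σ (Fin.last l)) (iterD l (σ ∘ Fin.castSucc) f)

/-- The functions `G^l_σ` of the paper (Lemma 2, Appendix D), defined recursively:
`G¹_{σ(1)} = ∑_i ∂²_{i,σ(1)}(log p) ∂_i φ + ∂_{σ(1)} h` and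
`G^l_σ = ∑_i ∂²_{i,σ(l)}(log p) ∂_i (∇^{l−1}_{σ|_{1:l−1}} φ) + ∂_{σ(l)} G^{l−1}_{σ|_{1:l−1}}`.
Here `Gfun p h φ l σ` with `σ : Fin (l+1) → Fin d` is `G^{l+1}_σ`. -/
noncomputable def Gfun {d : ℕ} (p h φ : (Fin d → ℝ) → ℝ) :
    (l : ℕ) → (Fin (l + 1) → Fin d) → (Fin d → ℝ) → ℝ
  | 0, σ => fun x =>
      (∑ i, pd i (pd (σ 0) (fun y => Real.log (p y))) x * pd i φ x) + pd (σ 0) h x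
  | l + 1, σ => fun x =>
      (∑ i, pd i (pd (σ (Fin.last (l + 1))) (fun y => Real.log (p y))) x *
          pd i (iterD (l + 1) (σ ∘ Fin.castSucc) φ) x)
        + pd (σ (Fin.last (l + 1))) (Gfun p h φ l (σ ∘ Fin.castSucc)) x

section PartialDerivative

variable {d : ℕ} {f g : (Fin d → ℝ) → ℝ} {x : Fin d → ℝ}

lemma contDiff_pd (hf : ContDiff ℝ ∞ f) (i : Fin d) : ContDiff ℝ ∞ (pd i f) :=
  (hf.fderiv_right le_rfl).clm_apply contDiff_const

lemma pd_add (i : Fin d) (hf : DifferentiableAt ℝ f x) (hg : DifferentiableAt ℝ g x) :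
    pd i (fun y => f y + g y) x = pd i f x + pd i g x := by
  simp [pd, fderiv_fun_add hf hg]

lemma pd_mul (i : Fin d) (hf : DifferentiableAt ℝ f x) (hg : DifferentiableAt ℝ g x) :
    pd i (fun y => f y * g y) x = pd i f x * g x + f x * pd i g x := by
  simp [pd, fderiv_fun_mul hf hg]
  ring

lemma pd_sum {ι : Type*} (s : Finset ι) {F : ι → (Fin d → ℝ) → ℝ} (i : Fin d)
    (hF : ∀ k ∈ s, DifferentiableAt ℝ (F k) x) :
    pd i (fun y => ∑ k ∈ s, F k y) x = ∑ k ∈ s, pd i (F k) x := by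
  simp [pd, fderiv_fun_sum hF]

lemma pd_neg (i : Fin d) : pd i (fun y => -f y) x = -pd i f x := by
  simp [pd, fderiv_fun_neg]

lemma pd_sub_const (i : Fin d) (c : ℝ) : pd i (fun y => f y - c) x = pd i f x := by
  simp only [pd, fderiv_sub_const]

lemma pd_comm {n : WithTop ℕ∞} (hf : ContDiffAt ℝ n f x) (hn : 2 ≤ n) (i j : Fin d) :
    pd i (pd j f) x = pd j (pd i f) x := by
  have hf' : DifferentiableAt ℝ (fderiv ℝ f) x :=
    (hf.fderiv_right (m := 1) (by rwa [one_add_one_eq_two])).differentiableAt one_ne_zero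
  have key (a b : Fin d) :
      pd a (pd b f) x = fderiv ℝ (fderiv ℝ f) x (Pi.single a 1) (Pi.single b 1) := by
    change fderiv ℝ (fun y => fderiv ℝ f y (Pi.single b 1)) x (Pi.single a 1) = _
    simp [fderiv_clm_apply hf' (differentiableAt_const _)]
  rw [key, key]
  exact hf.isSymmSndFDerivAt (by simpa using hn) _ _

lemma mul_pd_log (i : Fin d) (hf : DifferentiableAt ℝ f x) (hfx : f x ≠ 0) :
    f x * pd i (fun y => Real.log (f y)) x = pd i f x := by
  simp [pd, (hf.hasFDerivAt.log hfx).fderiv, hfx]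

lemma contDiff_iterD {φ : (Fin d → ℝ) → ℝ} (hφ : ContDiff ℝ ∞ φ) :
    ∀ (l : ℕ) (σ : Fin l → Fin d), ContDiff ℝ ∞ (iterD l σ φ)
  | 0, _ => hφ
  | l + 1, σ => contDiff_pd (contDiff_iterD hφ l (σ ∘ Fin.castSucc)) _

end PartialDerivative

section DriftLaplacian

variable {d : ℕ}

noncomputable def driftLaplacian (ℓ ψ : (Fin d → ℝ) → ℝ) (x : Fin d → ℝ) : ℝ :=
  ∑ i, (pd i ℓ x * pd i ψ x + pd i (pd i ψ) x)

lemma sum_pd_mul_pd_eq_mul_driftLaplacian {p ψ : (Fin d → ℝ) → ℝ} {x : Fin d → ℝ}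
    (hp : DifferentiableAt ℝ p x) (hpx : p x ≠ 0) (hψ : ∀ i, DifferentiableAt ℝ (pd i ψ) x) :
    ∑ i, pd i (fun y => p y * pd i ψ y) x
      = p x * driftLaplacian (fun y => Real.log (p y)) ψ x := by
  simp only [driftLaplacian, Finset.mul_sum, pd_mul _ hp (hψ _), ← mul_pd_log _ hp hpx]
  exact Finset.sum_congr rfl fun i _ => by ring

lemma pd_driftLaplacian {ℓ ψ : (Fin d → ℝ) → ℝ} (hℓ : ContDiff ℝ ∞ ℓ) (hψ : ContDiff ℝ ∞ ψ)
    (j : Fin d) (x : Fin d → ℝ) :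
    pd j (driftLaplacian ℓ ψ) x
      = ∑ i, pd i (pd j ℓ) x * pd i ψ x + driftLaplacian ℓ (pd j ψ) x := by
  have comm {f : (Fin d → ℝ) → ℝ} (hf : ContDiff ℝ ∞ f) (a b) : pd a (pd b f) = pd b (pd a f) :=
    funext fun _ => pd_comm hf.contDiffAt (WithTop.coe_le_coe.2 le_top) a b
  have term (i : Fin d) :
      pd j (fun y => pd i ℓ y * pd i ψ y + pd i (pd i ψ) y) x
        = pd i (pd j ℓ) x * pd i ψ x + (pd i ℓ x * pd i (pd j ψ) x + pd i (pd i (pd j ψ)) x) := by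
    have hψi := contDiff_pd hψ i
    have hℓi' := (contDiff_pd hℓ i).differentiable (by simp) x
    have hψi' := hψi.differentiable (by simp) x
    rw [pd_add _ (hℓi'.fun_mul hψi') ((contDiff_pd hψi i).differentiable (by simp) x),
      pd_mul _ hℓi' hψi', comm hℓ, comm hψ, comm hψi, comm hψ]
    ring
  unfold driftLaplacian
  rw [pd_sum]
  · simp only [term, Finset.sum_add_distrib]
  · exact fun i _ => (((contDiff_pd hℓ i).mul (contDiff_pd hψ i)).add
      (contDiff_pd (contDiff_pd hψ i) i)).differentiable (by simp) x

lemma neg_sum_pd_mul_pd_pd_eq {p g ψ : (Fin d → ℝ) → ℝ} (hp : ContDiff ℝ ∞ p)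
    (hppos : ∀ x, 0 < p x) (hψ : ContDiff ℝ ∞ ψ)
    (hψg : ∀ x, -∑ i, pd i (fun y => p y * pd i ψ y) x = g x * p x) (j : Fin d) (x : Fin d → ℝ) :
    -∑ i, pd i (fun y => p y * pd i (pd j ψ) y) x
      = (∑ i, pd i (pd j (fun y => Real.log (p y))) x * pd i ψ x + pd j g x) * p x := by
  have hdiv {f : (Fin d → ℝ) → ℝ} (hf : ContDiff ℝ ∞ f) (y) :=
    sum_pd_mul_pd_eq_mul_driftLaplacian (hp.differentiable (by simp) y) (hppos y).ne'
      fun i => (contDiff_pd hf i).differentiable (by simp) y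
  have hLψ : driftLaplacian (fun y => Real.log (p y)) ψ = fun y => -g y := by
    funext y
    have hy := hψg y
    rw [hdiv hψ] at hy
    exact mul_left_cancel₀ (hppos y).ne' (by linarith)
  have hLψj := pd_driftLaplacian (hp.log fun y => (hppos y).ne') hψ j x
  rw [hLψ, pd_neg] at hLψj
  rw [hdiv (contDiff_pd hψ j)]
  linear_combination p x * hLψj

end DriftLaplacian

theorem stmt12_general {d : ℕ} (p h φ : (Fin d → ℝ) → ℝ)
    (hp : ContDiff ℝ ∞ p) (hφ : ContDiff ℝ ∞ φ)
    (hppos : ∀ x, 0 < p x) (hhat : ℝ)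
    (heq : ∀ x : Fin d → ℝ,
      -∑ i, pd i (fun y => p y * pd i φ y) x = (h x - hhat) * p x) :
    ∀ (l : ℕ) (σ : Fin (l + 1) → Fin d) (x : Fin d → ℝ),
      -∑ i, pd i (fun y => p y * pd i (iterD (l + 1) σ φ) y) x
        = Gfun p h φ l σ x * p x := by
  intro l
  induction l with
  | zero =>
    intro σ x
    have h1 := neg_sum_pd_mul_pd_pd_eq hp hppos hφ heq (σ 0) x
    rwa [pd_sub_const] at h1
  | succ l ih =>
    intro σ x
    exact neg_sum_pd_mul_pd_pd_eq hp hppos (contDiff_iterD hφ _ _) (ih (σ ∘ Fin.castSucc)) _ x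

/-- Lemma 2 of the paper, Appendix D.
If `p, h, φ` are smooth, `p > 0`, and `−∑_i ∂_i(p ∂_i φ) = (h − ĥ)p` on `ℝ^d`, then for
every `l ≥ 1` and every multi-index `σ ∈ {1,…,d}^l`,
`−∑_i ∂_i(p ∂_i(∇^l_σ φ)) = G^l_σ · p` on `ℝ^d`. -/
theorem stmt12 {d : ℕ} (p h φ : (Fin d → ℝ) → ℝ)
    (hp : ContDiff ℝ ∞ p) (hh : ContDiff ℝ ∞ h) (hφ : ContDiff ℝ ∞ φ)
    (hppos : ∀ x, 0 < p x) (hhat : ℝ)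
    (heq : ∀ x : Fin d → ℝ,
      -∑ i, pd i (fun y => p y * pd i φ y) x = (h x - hhat) * p x) :
    ∀ (l : ℕ) (σ : Fin (l + 1) → Fin d) (x : Fin d → ℝ),
      -∑ i, pd i (fun y => p y * pd i (iterD (l + 1) σ φ) y) x
        = Gfun p h φ l σ x * p x :=
  stmt12_general p h φ hp hφ hppos hhat heq
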